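/- arXiv:2302.13787 — 3 statements merged into one kernel-verified Lean document; each statement's English description precedes it below -/
import Mathlib

section
/- Let R be a ring, B = R[X_1,...,X_n] a polynomial ring with a weighted degree map λ, and J = (f_1,...,f_m) an ideal of B. Suppose (i) f̃_i = f_i for 1 ≤ i ≤ m−1 (i.e., f_1,...,f_{m−1} are λ-homogeneous), and (ii) f̃_m is a non-zerodivisor in B/(f_1,...,f_{m−1}). Then J̃ = (f_1,...,f_{m−1}, f̃_m). -/
open scoped BigOperators

/-- The (real) weighted degree of a monomial exponent `e` with weights `w`. -/
noncomputable def monWeight {n : ℕ} (w : Fin n → ℝ) (e : Fin n →₀ ℕ) : ℝ :=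
  ∑ i ∈ e.support, (e i : ℝ) * w i

/-- `p̃`: the sum of the monomials of `p` of maximal weighted degree. -/
noncomputable def topPart {R : Type*} [CommSemiring R] {n : ℕ} (w : Fin n → ℝ)
    (p : MvPolynomial (Fin n) R) : MvPolynomial (Fin n) R :=
  ∑ e ∈ p.support.filter
      (fun e => ∀ e' ∈ p.support, monWeight w e' ≤ monWeight w e),
    MvPolynomial.monomial e (p.coeff e)

/-- `Ĩ`: the ideal generated by the top parts of the elements of `I`. -/
noncomputable def topIdeal {R : Type*} [CommSemiring R] {n : ℕ} (w : Fin n → ℝ)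
    (I : Ideal (MvPolynomial (Fin n) R)) : Ideal (MvPolynomial (Fin n) R) :=
  Ideal.span (topPart w '' (I : Set (MvPolynomial (Fin n) R)))

/-!
The ideal `I = (f_1,…,f_{m-1})` is homogeneous because its generators are. Write `p ∈ J` as
`p = a + b f_m` with `a ∈ I`, and let `c` be the top weight of `p`: then every component of
`b f_m` of weight above `c` lies in `I`, and it remains to see that the component of weight `c`
lies in `I + (f̃_m)`. Let `b̃` be the top part of `b`, of weight `c_b`, and `t` the top weight of
`f_m`. If `c_b + t > c`, the component of weight `c_b + t` of `b f_m` is `b̃ f̃_m ∈ I`, so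
`b̃ ∈ I` as `f̃_m` is a non-zerodivisor modulo `I`, and we may replace `b` by `b - b̃`, which has
fewer monomials. Otherwise that component is `0` or `b̃ f̃_m`.
-/

namespace MvPolynomial

open Finsupp

section Weighted

variable {R σ M : Type*} [CommRing R] [AddCommMonoid M] {w : σ → M}

theorem support_sub_weightedHomogeneousComponent [DecidableEq M] (c : M)
    (p : MvPolynomial σ R) :
    (p - weightedHomogeneousComponent w c p).support = {e ∈ p.support | weight w e ≠ c} := by
  ext e
  by_cases he : weight w e = c <;>
    simp [coeff_weightedHomogeneousComponent, he]

variable [LinearOrder M]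

theorem weightedHomogeneousComponent_eq_zero_of_lt {p : MvPolynomial σ R} {c d : M}
    (hp : ∀ e ∈ p.support, weight w e ≤ c) (hcd : c < d) :
    weightedHomogeneousComponent w d p = 0 :=
  weightedHomogeneousComponent_eq_zero' d p fun e he => ((hp e he).trans_lt hcd).ne

theorem weight_le_of_mem_support_mul [IsOrderedAddMonoid M] {a b : MvPolynomial σ R} {c t : M}
    (ha : ∀ e ∈ a.support, weight w e ≤ c) (hb : ∀ e ∈ b.support, weight w e ≤ t) :
    ∀ e ∈ (a * b).support, weight w e ≤ c + t := by
  classical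
  intro e he
  obtain ⟨u, hu, v, hv, rfl⟩ := Finset.mem_add.mp (support_mul a b he)
  rw [map_add]
  exact add_le_add (ha u hu) (hb v hv)

variable [IsOrderedCancelAddMonoid M]

theorem weightedHomogeneousComponent_add_mul {a b : MvPolynomial σ R} {c t : M}
    (ha : ∀ e ∈ a.support, weight w e ≤ c) (hb : ∀ e ∈ b.support, weight w e ≤ t) :
    weightedHomogeneousComponent w (c + t) (a * b) =
      weightedHomogeneousComponent w c a * weightedHomogeneousComponent w t b := by
  classical
  have hom := (weightedHomogeneousComponent_isWeightedHomogeneous (R := R) (w := w) c a).mul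
    (weightedHomogeneousComponent_isWeightedHomogeneous t b)
  ext e
  rw [coeff_weightedHomogeneousComponent]
  split_ifs with he
  · rw [coeff_mul, coeff_mul]
    refine Finset.sum_congr rfl fun ⟨u, v⟩ huv => ?_
    rcases eq_or_ne (coeff u a) 0 with hu | hu
    · simp [coeff_weightedHomogeneousComponent, hu]
    rcases eq_or_ne (coeff v b) 0 with hv | hv
    · simp [coeff_weightedHomogeneousComponent, hv]
    obtain ⟨hu', hv'⟩ := (add_eq_add_iff_eq_and_eq (ha u (mem_support_iff.2 hu))
      (hb v (mem_support_iff.2 hv))).1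
        (by rw [← map_add, Finset.HasAntidiagonal.mem_antidiagonal.1 huv, he])
    rw [coeff_weightedHomogeneousComponent, coeff_weightedHomogeneousComponent,
      if_pos hu', if_pos hv']
  · exact (hom.coeff_eq_zero e he).symm

attribute [local instance] weightedGradedAlgebra

variable [DecidableEq M]

theorem weightedHomogeneousComponent_mul_mem_sup_span {I : Ideal (MvPolynomial σ R)}
    (hI : I.IsHomogeneous (weightedHomogeneousSubmodule R w)) {f : MvPolynomial σ R} {t : M}
    (hf : ∀ e ∈ f.support, weight w e ≤ t)
    (hf_top : Ideal.Quotient.mk I (weightedHomogeneousComponent w t f) ∈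
      nonZeroDivisors (MvPolynomial σ R ⧸ I))
    (b : MvPolynomial σ R) (d : M)
    (hb : ∀ d', d < d' → weightedHomogeneousComponent w d' (b * f) ∈ I) :
    weightedHomogeneousComponent w d (b * f) ∈
      I ⊔ Ideal.span {weightedHomogeneousComponent w t f} := by
  rcases b.support.eq_empty_or_nonempty with hb0 | hb0
  · simp [support_eq_empty.1 hb0]
  obtain ⟨e₀, he₀, hmax⟩ := Finset.exists_max_image b.support (weight w) hb0
  set c := weight w e₀
  rcases lt_trichotomy (c + t) d with hlt | heq | hgt
  · rw [weightedHomogeneousComponent_eq_zero_of_lt (weight_le_of_mem_support_mul hmax hf) hlt]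
    exact zero_mem _
  · rw [← heq, weightedHomogeneousComponent_add_mul hmax hf]
    exact Ideal.mem_sup_right (Ideal.mul_mem_left _ _ (Ideal.mem_span_singleton_self _))
  · have htop_mem : weightedHomogeneousComponent w c b ∈ I := by
      have := hb _ hgt
      rw [weightedHomogeneousComponent_add_mul hmax hf] at this
      rw [← Ideal.Quotient.eq_zero_iff_mem, ← mul_right_mem_nonZeroDivisors_eq_zero_iff hf_top,
        ← map_mul, Ideal.Quotient.eq_zero_iff_mem]
      exact this
    have hcomp_mem : ∀ d', weightedHomogeneousComponent w d'
        (weightedHomogeneousComponent w c b * f) ∈ I := fun d' =>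
      weightedHomogeneousComponent_mem_of_mem R w hI (I.mul_mem_right _ htop_mem) d'
    have hlt : (b - weightedHomogeneousComponent w c b).support.card < b.support.card := by
      rw [support_sub_weightedHomogeneousComponent]
      exact Finset.card_lt_card (Finset.filter_ssubset.2 ⟨e₀, he₀, not_not.2 rfl⟩)
    have key := weightedHomogeneousComponent_mul_mem_sup_span hI hf hf_top
      (b - weightedHomogeneousComponent w c b) d fun d' hd' => by
        rw [sub_mul, map_sub]
        exact I.sub_mem (hb d' hd') (hcomp_mem d')
    rw [sub_mul, map_sub] at key
    simpa using Ideal.add_mem _ key (Ideal.mem_sup_left (hcomp_mem d))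
termination_by b.support.card

end Weighted

end MvPolynomial

open MvPolynomial Finsupp

section TopPart

variable {R : Type*} [CommRing R] {n : ℕ} {w : Fin n → ℝ}

theorem monWeight_eq_weight (w : Fin n → ℝ) : monWeight w = weight w := by
  ext e
  rw [monWeight, weight_apply, Finsupp.sum]
  exact Finset.sum_congr rfl fun i _ => (nsmul_eq_mul _ _).symm

theorem exists_topPart_eq_weightedHomogeneousComponent (p : MvPolynomial (Fin n) R) :
    ∃ c : ℝ, (∀ e ∈ p.support, weight w e ≤ c) ∧
      topPart w p = weightedHomogeneousComponent w c p := by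
  classical
  rcases p.support.eq_empty_or_nonempty with hp | hp
  · refine ⟨0, by simp [hp], ?_⟩
    simp [MvPolynomial.support_eq_empty.1 hp, topPart]
  obtain ⟨e₀, he₀, hmax⟩ := Finset.exists_max_image p.support (weight w) hp
  refine ⟨weight w e₀, hmax, ?_⟩
  rw [weightedHomogeneousComponent_apply, topPart, monWeight_eq_weight]
  refine Finset.sum_congr (Finset.filter_congr fun e he => ?_) fun _ _ => rfl
  exact ⟨fun h => le_antisymm (hmax e he) (h e₀ he₀), fun h e' he' => h ▸ hmax e' he'⟩

theorem isWeightedHomogeneous_of_topPart_eq {p : MvPolynomial (Fin n) R}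
    (hp : topPart w p = p) : ∃ c, p.IsWeightedHomogeneous w c := by
  obtain ⟨c, -, htop⟩ := exists_topPart_eq_weightedHomogeneousComponent (w := w) p
  exact ⟨c, hp ▸ htop ▸ weightedHomogeneousComponent_isWeightedHomogeneous c p⟩

attribute [local instance] weightedGradedAlgebra

theorem isHomogeneous_span_of_topPart_eq {s : Set (MvPolynomial (Fin n) R)}
    (hs : ∀ p ∈ s, topPart w p = p) :
    (Ideal.span s).IsHomogeneous (weightedHomogeneousSubmodule R w) :=
  Ideal.homogeneous_span _ _ fun p hp => isWeightedHomogeneous_of_topPart_eq (hs p hp)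

theorem topPart_mem_sup_span_topPart {I : Ideal (MvPolynomial (Fin n) R)}
    (hI : I.IsHomogeneous (weightedHomogeneousSubmodule R w)) {f : MvPolynomial (Fin n) R}
    (hf : Ideal.Quotient.mk I (topPart w f) ∈ nonZeroDivisors (MvPolynomial (Fin n) R ⧸ I))
    {p : MvPolynomial (Fin n) R} (hp : p ∈ I ⊔ Ideal.span {f}) :
    topPart w p ∈ I ⊔ Ideal.span {topPart w f} := by
  obtain ⟨t, hft, hf_top⟩ := exists_topPart_eq_weightedHomogeneousComponent (w := w) f
  obtain ⟨c, hpc, hp_top⟩ := exists_topPart_eq_weightedHomogeneousComponent (w := w) p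
  obtain ⟨a, ha, _, hy, rfl⟩ := Submodule.mem_sup.1 hp
  obtain ⟨b, rfl⟩ := Ideal.mem_span_singleton'.1 hy
  rw [hf_top] at hf ⊢
  have hbf : ∀ d, c < d → weightedHomogeneousComponent w d (b * f) ∈ I := fun d hcd => by
    have := weightedHomogeneousComponent_eq_zero_of_lt hpc hcd
    rw [map_add, add_eq_zero_iff_eq_neg'] at this
    exact this ▸ I.neg_mem (weightedHomogeneousComponent_mem_of_mem R w hI ha d)
  rw [hp_top, map_add]
  exact add_mem (Ideal.mem_sup_left (weightedHomogeneousComponent_mem_of_mem R w hI ha c))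
    (weightedHomogeneousComponent_mul_mem_sup_span hI hft hf b c hbf)

end TopPart

/-- **Top degree ideal** (Proposition `top degree ideal`).
Let `R` be a ring, `B = R[X_1,…,X_n]` with a weighted degree map `λ` and
`J = (f_1,…,f_m)` an ideal of `B`.  Suppose (i) `f̃_i = f_i` for `1 ≤ i ≤ m − 1` and
(ii) `f̃_m` is a non-zerodivisor in `B/(f_1,…,f_{m−1})`.
Then `J̃ = (f_1,…,f_{m−1},f̃_m)`.  (Here the family `g = (f_1,…,f_{m-1})` lists the
first `m − 1` generators and `fm = f_m` is the last one.) -/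
theorem stmt6 (R : Type*) [CommRing R] (n m : ℕ) (w : Fin n → ℝ)
    (g : Fin m → MvPolynomial (Fin n) R) (fm : MvPolynomial (Fin n) R)
    (hg : ∀ i, topPart w (g i) = g i)
    (hfm : Ideal.Quotient.mk (Ideal.span (Set.range g)) (topPart w fm) ∈
      nonZeroDivisors (MvPolynomial (Fin n) R ⧸ Ideal.span (Set.range g))) :
    topIdeal w (Ideal.span (Set.range g ∪ {fm}))
      = Ideal.span (Set.range g ∪ {topPart w fm}) := by
  have hI := isHomogeneous_span_of_topPart_eq (Set.forall_mem_range.2 hg)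
  rw [Ideal.span_union, Ideal.span_union]
  refine le_antisymm (Ideal.span_le.2 ?_) (sup_le (Ideal.span_le.2 ?_) (Ideal.span_le.2 ?_))
  · rintro _ ⟨p, hp, rfl⟩
    exact topPart_mem_sup_span_topPart hI hfm hp
  · rintro _ ⟨i, rfl⟩
    exact Ideal.subset_span ⟨g i, Ideal.mem_sup_left (Ideal.subset_span ⟨i, rfl⟩), hg i⟩
  · rintro _ rfl
    exact Ideal.subset_span ⟨fm, Ideal.mem_sup_right (Ideal.mem_span_singleton_self fm), rfl⟩
end

section
/- Let k be a field of characteristic zero, R = k[a,b] a polynomial ring in two variables, and B = R[X,Y,Z]. Let D be the R-derivation on B determined by DX = a, DY = b, DZ = bX − aY, which is a locally nilpotent nice R-derivation that is not fixed point free, with kernel A = R[u, v, w] where u = bX − aY, v = bZ − uY, w = aZ − uX. Then the plinth ideal I_1 of D equals the ideal (a, b, u)A of A. -/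
/-!
Write `A = R[u, v, w]`. Since `R = k ⊕ (a, b)R`, every element of `A` is `F(v, w)` plus an
element of `(a, b, u)A`, and `(a, b, u)A ⊆ DB` because `a = DX`, `b = DY`, `u = DZ`. So it
suffices to show that `F(v, w) ∈ DB` forces `F = 0`.

The `k`-derivation `E = Y ∂/∂X + b ∂/∂a` commutes with `D` and satisfies `Eu = Ev = 0`, `Ew = v`.
Hence `E` preserves `DB` and `E (F(v, w)) = (v ∂F/∂w)(v, w)`, and induction on the `w`-degree
reduces to the case `F = G(v)`. There, a `k`-algebra map `Φ : B → k[a, b][s, t]` turns `D` into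
`Δ = a ∂/∂s + b ∂/∂t` and `v` into `(bs - at)⁴`. A `k`-linear functional that vanishes on the
image of `Δ` but takes the value `(m + 1)!` on `(bs - at)ᵐ` and `0` on the other powers of
`bs - at` then forces `G = 0` in characteristic zero.
-/

open MvPolynomial Finset
open scoped Nat

namespace MvPolynomial

variable {σ R : Type*} [CommSemiring R]

theorem degreeOf_pderiv_lt {i : σ} {F : MvPolynomial σ R} (h : pderiv i F ≠ 0) :
    degreeOf i (pderiv i F) < degreeOf i F := by
  have hle : ∀ m ∈ (pderiv i F).support, m i + 1 ≤ degreeOf i F := fun m hm => by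
    have hcoeff : coeff (m + Finsupp.single i 1) F ≠ 0 := fun h0 =>
      mem_support_iff.mp hm (by rw [coeff_pderiv, h0, zero_mul])
    simpa using monomial_le_degreeOf i (mem_support_iff.mpr hcoeff)
  obtain ⟨m, hm⟩ := support_nonempty.mpr h
  rw [degreeOf_lt_iff (by have := hle m hm; omega)]
  exact fun m hm => hle m hm

theorem notMem_vars_of_pderiv_eq_zero [IsDomain R] [CharZero R] {i : σ}
    {F : MvPolynomial σ R} (h : pderiv i F = 0) : i ∉ F.vars := by
  classical
  rw [mem_vars_iff_mem_support]
  rintro ⟨d, hd, hi⟩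
  have hdi : Finsupp.single i 1 ≤ d :=
    Finsupp.single_le_iff.mpr (Finsupp.mem_support_iff.mp hi).bot_lt
  have := congrArg (coeff (d - Finsupp.single i 1)) h
  rw [coeff_pderiv, tsub_add_cancel_of_le hdi, coeff_zero] at this
  exact mul_ne_zero (mem_support_iff.mp hd) (Nat.cast_add_one_ne_zero _) this

theorem induction_on_C_X {τ : Type*} {motive : MvPolynomial σ (MvPolynomial τ R) → Prop}
    (p : MvPolynomial σ (MvPolynomial τ R)) (C_C : ∀ r, motive (C (C r)))
    (C_X : ∀ j, motive (C (X j))) (X : ∀ i, motive (X i))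
    (add : ∀ p q, motive p → motive q → motive (p + q))
    (mul : ∀ p q, motive p → motive q → motive (p * q)) : motive p := by
  induction p using MvPolynomial.induction_on with
  | C r =>
    induction r using MvPolynomial.induction_on with
    | C r => exact C_C r
    | add r s hr hs => simpa using add _ _ hr hs
    | mul_X r j hr => simpa using mul _ _ hr (C_X j)
  | add p q hp hq => exact add _ _ hp hq
  | mul_X p i hp => exact mul _ _ hp (X i)

theorem exists_eq_C_add_X_zero_mul_add_X_one_mul (r : MvPolynomial (Fin 2) R) :
    ∃ c s t, r = C c + X 0 * s + X 1 * t := by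
  induction r using MvPolynomial.induction_on with
  | C c => exact ⟨c, 0, 0, by simp⟩
  | add p q hp hq =>
    obtain ⟨c, s, t, rfl⟩ := hp
    obtain ⟨c', s', t', rfl⟩ := hq
    exact ⟨c + c', s + s', t + t', by simp only [map_add]; ring⟩
  | mul_X p i _ =>
    fin_cases i
    · exact ⟨0, p, 0, by simp [mul_comm]⟩
    · exact ⟨0, 0, p, by simp [mul_comm]⟩

theorem aeval_X_zero_aeval_eq_of_notMem_vars {F : MvPolynomial (Fin 2) R} (h : 1 ∉ F.vars) :
    Polynomial.aeval (X 0) (aeval ![Polynomial.X, (0 : Polynomial R)] F) = F := by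
  classical
  rw [← AlgHom.comp_apply, comp_aeval]
  convert aeval_ite_mem_eq_self F (s := {0}) fun i hi => ?_ using 2
  · ext i; fin_cases i <;> simp
  · fin_cases i
    · rfl
    · exact absurd hi h

end MvPolynomial

theorem Derivation.map_mvPolynomial_aeval {σ R A M : Type*} [Fintype σ] [CommSemiring R]
    [CommSemiring A] [Algebra R A] [AddCommMonoid M] [Module A M] [Module R M]
    [IsScalarTower R A M] (δ : Derivation R A M) (x : σ → A) (F : MvPolynomial σ R) :
    δ (aeval x F) = ∑ i, aeval x (pderiv i F) • δ (x i) := by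
  classical
  induction F using MvPolynomial.induction_on with
  | C r => simp
  | add p q hp hq => simp [hp, hq, add_smul, sum_add_distrib]
  | mul_X p i hp =>
    simp [Derivation.leibniz, hp, pderiv_X, Pi.single_apply, add_smul, sum_add_distrib,
      smul_sum, mul_smul, apply_ite (aeval x), ite_smul]

def Derivation.conj {R A B : Type*} [CommSemiring R] [CommRing A] [CommRing B]
    [Algebra R A] [Algebra R B] (e : A ≃ₐ[R] B) (d : Derivation R A A) : Derivation R B B :=
  Derivation.mk' (e.toAlgHom.toLinearMap ∘ₗ d.toLinearMap ∘ₗ e.symm.toAlgHom.toLinearMap)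
    fun x y => by simp [Derivation.leibniz]

@[simp] theorem Derivation.conj_apply {R A B : Type*} [CommSemiring R] [CommRing A]
    [CommRing B] [Algebra R A] [Algebra R B] (e : A ≃ₐ[R] B) (d : Derivation R A A) (b : B) :
    d.conj e b = e (d (e.symm b)) := rfl

namespace Winkelmann

noncomputable section

def ex (i j : ℕ) : Fin 2 →₀ ℕ := Finsupp.single 0 i + Finsupp.single 1 j

@[simp] theorem ex_apply_zero (i j : ℕ) : ex i j 0 = i := by simp [ex]

@[simp] theorem ex_apply_one (i j : ℕ) : ex i j 1 = j := by simp [ex]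

theorem eq_and_eq_of_ex_eq {i j i' j' : ℕ} (h : ex i j = ex i' j') : i = i' ∧ j = j' :=
  ⟨by simpa using congrArg (· 0) h, by simpa using congrArg (· 1) h⟩

theorem ex_add_single_zero (i j : ℕ) : ex i j + Finsupp.single 0 1 = ex (i + 1) j := by
  ext x; fin_cases x <;> simp [ex]

theorem ex_add_single_one (i j : ℕ) : ex i j + Finsupp.single 1 1 = ex i (j + 1) := by
  ext x; fin_cases x <;> simp [ex]

section

variable {R : Type*} [CommSemiring R]

theorem monomial_ex (i j : ℕ) (r : R) : monomial (ex i j) r = C r * X 0 ^ i * X 1 ^ j := by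
  rw [ex, monomial_add_single, ← C_mul_X_pow_eq_monomial]

theorem coeff_ex_zero_left_X_zero_mul (j : ℕ) (r : MvPolynomial (Fin 2) R) :
    coeff (ex 0 j) (X 0 * r) = 0 := by
  classical
  rw [coeff_X_mul', if_neg (by simp)]

theorem coeff_ex_zero_right_X_one_mul (i : ℕ) (r : MvPolynomial (Fin 2) R) :
    coeff (ex i 0) (X 1 * r) = 0 := by
  classical
  rw [coeff_X_mul', if_neg (by simp)]

theorem coeff_ex_succ_left_X_zero_mul (i j : ℕ) (r : MvPolynomial (Fin 2) R) :
    coeff (ex (i + 1) j) (X 0 * r) = coeff (ex i j) r := by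
  rw [← ex_add_single_zero, add_comm, coeff_X_mul]

theorem coeff_ex_succ_right_X_one_mul (i j : ℕ) (r : MvPolynomial (Fin 2) R) :
    coeff (ex i (j + 1)) (X 1 * r) = coeff (ex i j) r := by
  rw [← ex_add_single_one, add_comm, coeff_X_mul]

end

variable (k : Type*) [CommRing k]

-- `a, b` are `X 0, X 1` in `Rab`; `s, t` are `X 0, X 1` in `Bst`; `X, Y, Z` are `X 0, X 1, X 2`.
abbrev Rab := MvPolynomial (Fin 2) k

abbrev Bst := MvPolynomial (Fin 2) (Rab k)

abbrev Bxyz := MvPolynomial (Fin 3) (Rab k)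

def Δ : Derivation (Rab k) (Bst k) (Bst k) := mkDerivation (Rab k) ![C (X 0), C (X 1)]

def uΔ : Bst k := C (X 1) * X 0 - C (X 0) * X 1

@[simp] theorem Δ_X (i : Fin 2) : Δ k (X i) = ![C (X 0), C (X 1)] i := mkDerivation_X _ _ _

@[simp] theorem Δ_uΔ : Δ k (uΔ k) = 0 := by
  simp only [uΔ, map_sub, Derivation.leibniz, Δ_X, Matrix.cons_val_zero, Matrix.cons_val_one,
    smul_eq_mul, derivation_C, mul_zero, add_zero]
  ring

theorem Δ_apply (g : Bst k) : Δ k g = C (X 0) * pderiv 0 g + C (X 1) * pderiv 1 g := by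
  induction g using MvPolynomial.induction_on with
  | C r => simp [Δ]
  | add p q hp hq => simp only [map_add, hp, hq]; ring
  | mul_X p i hp =>
    rw [Derivation.leibniz, hp, Δ_X]
    fin_cases i <;>
      simp only [Fin.zero_eta, Fin.mk_one, Matrix.cons_val_zero, Matrix.cons_val_one,
        Matrix.cons_val_fin_one, Derivation.leibniz, smul_eq_mul, pderiv_X_self,
        pderiv_X_of_ne zero_ne_one, pderiv_X_of_ne one_ne_zero, mul_one, mul_zero, zero_add] <;>
      ring

theorem coeff_Δ (i j : ℕ) (g : Bst k) :
    coeff (ex i j) (Δ k g) = (i + 1) • (X 0 * coeff (ex (i + 1) j) g)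
      + (j + 1) • (X 1 * coeff (ex i (j + 1)) g) := by
  simp only [Δ_apply, coeff_add, coeff_C_mul, coeff_pderiv, ex_add_single_zero, ex_apply_zero,
    ex_add_single_one, ex_apply_one, nsmul_eq_mul, Nat.cast_add, Nat.cast_one]
  ring

/-- The weight `(-1) ^ j * i ! * j !` of the coefficient of `a ^ j b ^ i s ^ i t ^ j` is chosen
so that the contributions of `a ∂/∂s` and `b ∂/∂t` cancel. -/
def obstruction (m : ℕ) : Bst k →ₗ[k] k :=
  ∑ p ∈ antidiagonal m, ((-1) ^ p.2 * p.1 ! * p.2 ! : k) •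
    lcoeff k (ex p.2 p.1) ∘ₗ (lcoeff (Rab k) (ex p.1 p.2)).restrictScalars k

theorem obstruction_apply (m : ℕ) (f : Bst k) :
    obstruction k m f = ∑ p ∈ antidiagonal m,
      (-1) ^ p.2 * p.1 ! * p.2 ! * coeff (ex p.2 p.1) (coeff (ex p.1 p.2) f) := by
  simp [obstruction, LinearMap.sum_apply]

theorem obstruction_Δ (m : ℕ) (g : Bst k) : obstruction k m (Δ k g) = 0 := by
  simp only [obstruction_apply, coeff_Δ, coeff_add, coeff_smul, mul_add, sum_add_distrib]
  cases m with
  | zero => simp [coeff_ex_zero_left_X_zero_mul, coeff_ex_zero_right_X_one_mul]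
  | succ n =>
    rw [Nat.sum_antidiagonal_succ', Nat.sum_antidiagonal_succ]
    simp only [coeff_ex_zero_left_X_zero_mul, coeff_ex_zero_right_X_one_mul,
      coeff_ex_succ_left_X_zero_mul, coeff_ex_succ_right_X_one_mul, smul_zero, mul_zero,
      zero_add, ← sum_add_distrib]
    refine sum_eq_zero fun p _ => ?_
    simp only [nsmul_eq_mul, Nat.factorial_succ, pow_succ]
    push_cast
    ring

theorem obstruction_monomial (m i j : ℕ) (r : Rab k) :
    obstruction k m (monomial (ex i j) r)
      = if i + j = m then (-1) ^ j * i ! * j ! * coeff (ex j i) r else 0 := by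
  classical
  rw [obstruction_apply]
  split_ifs with h
  · rw [sum_eq_single (i, j)]
    · simp
    · rintro ⟨i', j'⟩ _ hne
      rw [coeff_monomial, if_neg, coeff_zero, mul_zero]
      exact fun h' => hne (by obtain ⟨rfl, rfl⟩ := eq_and_eq_of_ex_eq h'; rfl)
    · simp [h]
  · refine sum_eq_zero fun p hp => ?_
    rw [coeff_monomial, if_neg, coeff_zero, mul_zero]
    rintro h'
    obtain ⟨rfl, rfl⟩ := eq_and_eq_of_ex_eq h'
    exact h (HasAntidiagonal.mem_antidiagonal.mp hp)

theorem uΔ_pow (q : ℕ) : uΔ k ^ q = ∑ p ∈ antidiagonal q,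
    monomial (ex p.1 p.2) (((-1) ^ p.2 * q.choose p.1 : k) • monomial (ex p.2 p.1) 1) := by
  rw [uΔ, sub_eq_add_neg, (Commute.all _ _).add_pow']
  refine sum_congr rfl fun p _ => ?_
  simp only [monomial_ex, smul_eq_C_mul, nsmul_eq_mul, C_mul, C_pow, C_neg, C_1, map_natCast,
    one_mul]
  ring

theorem obstruction_uΔ_pow (m q : ℕ) :
    obstruction k m (uΔ k ^ q) = if q = m then ((m + 1)! : k) else 0 := by
  rw [uΔ_pow, map_sum]
  split_ifs with h
  · subst h
    have hterm : ∀ p ∈ antidiagonal q, obstruction k q (monomial (ex p.1 p.2)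
        (((-1) ^ p.2 * q.choose p.1 : k) • monomial (ex p.2 p.1) 1)) = (q ! : k) := by
      rintro ⟨i, j⟩ hp
      rw [HasAntidiagonal.mem_antidiagonal] at hp
      subst hp
      rw [obstruction_monomial, if_pos rfl, coeff_smul, coeff_monomial, if_pos rfl,
        ← Nat.add_choose_mul_factorial_mul_factorial i j, Nat.choose_symm_add]
      have hsign : ((-1 : k) ^ j) * (-1) ^ j = 1 := by rw [← mul_pow]; simp
      push_cast
      linear_combination ((i + j).choose j * i ! * j ! : k) * hsign
    rw [sum_congr rfl hterm, sum_const, Nat.card_antidiagonal, Nat.factorial_succ]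
    simp
  · refine sum_eq_zero fun p hp => ?_
    rw [obstruction_monomial, if_neg (by rwa [HasAntidiagonal.mem_antidiagonal.mp hp])]

theorem obstruction_aeval_uΔ_pow {e : ℕ} (he : e ≠ 0) (g : Polynomial k) (m : ℕ) :
    obstruction k (e * m) (Polynomial.aeval (uΔ k ^ e) g) = (e * m + 1)! * g.coeff m := by
  induction g using Polynomial.induction_on' with
  | add p q hp hq => simp [hp, hq, mul_add]
  | monomial n c =>
    rw [Polynomial.aeval_monomial, ← Algebra.smul_def, map_smul, ← pow_mul,
      obstruction_uΔ_pow, Polynomial.coeff_monomial]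
    simp only [Nat.mul_left_cancel_iff (Nat.pos_of_ne_zero he)]
    split_ifs <;> simp [mul_comm]

theorem eq_zero_of_aeval_uΔ_pow_mem_range [IsDomain k] [CharZero k] {e : ℕ} (he : e ≠ 0)
    {g : Polynomial k} (h : Polynomial.aeval (uΔ k ^ e) g ∈ Set.range (Δ k)) : g = 0 := by
  obtain ⟨f, hf⟩ := h
  ext m
  have := obstruction_Δ k (e * m) f
  rw [hf, obstruction_aeval_uΔ_pow k he] at this
  simpa [Nat.factorial_ne_zero] using this

def u : Bxyz k := C (X 1) * X 0 - C (X 0) * X 1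

def v : Bxyz k := C (X 1) * X 2 - u k * X 1

def w : Bxyz k := C (X 0) * X 2 - u k * X 0

def D : Derivation (Rab k) (Bxyz k) (Bxyz k) := mkDerivation (Rab k) ![C (X 0), C (X 1), u k]

@[simp] theorem D_X (i : Fin 3) : D k (X i) = ![C (X 0), C (X 1), u k] i := mkDerivation_X _ _ _

@[simp] theorem D_u : D k (u k) = 0 := by
  simp only [u, map_sub, Derivation.leibniz, D_X, Matrix.cons_val_zero, Matrix.cons_val_one,
    smul_eq_mul, derivation_C, mul_zero, add_zero]
  ring

theorem D_X_mul_add_X_mul_add_X_mul {c₁ c₂ c₃ : Bxyz k} (h₁ : D k c₁ = 0) (h₂ : D k c₂ = 0)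
    (h₃ : D k c₃ = 0) :
    D k (X 0 * c₁ + X 1 * c₂ + X 2 * c₃) = C (X 0) * c₁ + C (X 1) * c₂ + u k * c₃ := by
  simp [Derivation.leibniz, h₁, h₂, h₃, mul_comm]

/-- The images of `a, b, u` are those of `X, Y, Z` under `Δ`, which makes `Φ ∘ D = Δ ∘ Φ`. -/
def Φ : Bxyz k →ₐ[k] Bst k :=
  aevalTower (aeval ![C (X 1) ^ 2, C (X 0) * uΔ k])
    ![C (X 1) * X 1, C (X 1) * X 0 ^ 2 - C (X 0) * X 0 * X 1, -(uΔ k ^ 2 * X 1)]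

@[simp] theorem Φ_X (i : Fin 3) :
    Φ k (X i) = ![C (X 1) * X 1, C (X 1) * X 0 ^ 2 - C (X 0) * X 0 * X 1, -(uΔ k ^ 2 * X 1)] i :=
  aevalTower_X _ _ _

@[simp] theorem Φ_C (r : Rab k) : Φ k (C r) = aeval ![C (X 1) ^ 2, C (X 0) * uΔ k] r :=
  aevalTower_C _ _ _

theorem Φ_u : Φ k (u k) = -(C (X 1) * uΔ k ^ 2) := by
  simp only [u, map_sub, map_mul, Φ_C, Φ_X, aeval_X, Matrix.cons_val_zero, Matrix.cons_val_one]
  rw [uΔ]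
  ring

theorem Φ_v : Φ k (v k) = uΔ k ^ 4 := by
  simp only [v, map_sub, map_mul, Φ_C, Φ_X, Φ_u, aeval_X, Matrix.cons_val, Matrix.cons_val_zero,
    Matrix.cons_val_one]
  rw [uΔ]
  ring

theorem Φ_D (p : Bxyz k) : Φ k (D k p) = Δ k (Φ k p) := by
  induction p using MvPolynomial.induction_on_C_X with
  | C_C r => simp
  | C_X j => fin_cases j <;> simp [Derivation.leibniz]
  | X i =>
    fin_cases i <;>
      simp only [Fin.zero_eta, Fin.mk_one, Fin.reduceFinMk, D_X, Φ_X, Φ_C, Φ_u, aeval_X, Δ_X,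
        Matrix.cons_val, Matrix.cons_val_zero, Matrix.cons_val_one, Matrix.cons_val_fin_one,
        map_neg, map_sub, Derivation.leibniz, Derivation.leibniz_pow, smul_eq_mul, nsmul_eq_mul,
        derivation_C, uΔ] <;>
      ring
  | add p q hp hq => simp [hp, hq]
  | mul p q hp hq => simp [Derivation.leibniz, hp, hq]

-- `Y ∂/∂X + b ∂/∂a`, built on `k[X, Y, Z, a, b]` and transported to `Bxyz k`.
def E : Derivation k (Bxyz k) (Bxyz k) :=
  (mkDerivation k (Sum.elim ![X (.inl 1), 0, 0] ![X (.inr 1), 0])).conj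
    (sumAlgEquiv k (Fin 3) (Fin 2))

@[simp] theorem E_X (i : Fin 3) : E k (X i) = ![X 1, 0, 0] i := by
  rw [E, Derivation.conj_apply, ← sumAlgEquiv_X_inl, AlgEquiv.symm_apply_apply, mkDerivation_X]
  fin_cases i <;> simp [sumAlgEquiv_X_inl]

@[simp] theorem E_C_X (j : Fin 2) : E k (C (X j)) = ![C (X 1), 0] j := by
  rw [E, Derivation.conj_apply, ← sumAlgEquiv_X_inr, AlgEquiv.symm_apply_apply, mkDerivation_X]
  fin_cases j <;> simp [sumAlgEquiv_X_inr]

@[simp] theorem E_C_C (r : k) : E k (C (C r)) = 0 := (E k).map_algebraMap r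

@[simp] theorem E_u : E k (u k) = 0 := by
  simp only [u, map_sub, Derivation.leibniz, E_X, E_C_X, Matrix.cons_val_zero, Matrix.cons_val_one,
    smul_eq_mul, mul_zero, add_zero, zero_add]
  ring

theorem E_v : E k (v k) = 0 := by
  simp [v, Derivation.leibniz]

theorem E_w : E k (w k) = v k := by
  simp only [w, v, map_sub, Derivation.leibniz, E_X, E_C_X, E_u, Matrix.cons_val,
    Matrix.cons_val_zero, smul_eq_mul, mul_zero, zero_add, add_zero]
  ring

theorem E_D (p : Bxyz k) : E k (D k p) = D k (E k p) := by
  induction p using MvPolynomial.induction_on_C_X with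
  | C_C r => simp
  | C_X j => fin_cases j <;> simp
  | X i => fin_cases i <;> simp
  | add p q hp hq => simp [hp, hq]
  | mul p q hp hq =>
    simp only [Derivation.leibniz, smul_eq_mul, map_add, hp, hq]
    ring

theorem E_aeval (F : MvPolynomial (Fin 2) k) :
    E k (aeval ![v k, w k] F) = aeval ![v k, w k] (pderiv 1 F * X 0) := by
  simp [Derivation.map_mvPolynomial_aeval, E_v, E_w, mul_comm]

theorem eq_zero_of_aeval_mem_range_of_notMem_vars [IsDomain k] [CharZero k]
    {F : MvPolynomial (Fin 2) k} (h : 1 ∉ F.vars)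
    (hF : aeval ![v k, w k] F ∈ Set.range (D k)) : F = 0 := by
  obtain ⟨G, rfl⟩ : ∃ G : Polynomial k, Polynomial.aeval (X 0) G = F :=
    ⟨_, aeval_X_zero_aeval_eq_of_notMem_vars h⟩
  have hG : Polynomial.aeval (uΔ k ^ 4) G ∈ Set.range (Δ k) := by
    obtain ⟨p, hp⟩ := hF
    refine ⟨Φ k p, ?_⟩
    rw [← Φ_D, hp, ← Polynomial.aeval_algHom_apply, aeval_X, ← Polynomial.aeval_algHom_apply]
    simp [Φ_v]
  rw [eq_zero_of_aeval_uΔ_pow_mem_range k four_ne_zero hG, map_zero]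

theorem eq_zero_of_aeval_mem_range [IsDomain k] [CharZero k] (F : MvPolynomial (Fin 2) k)
    (hF : aeval ![v k, w k] F ∈ Set.range (D k)) : F = 0 := by
  induction hn : degreeOf 1 F using Nat.strong_induction_on generalizing F with
  | _ n ih =>
  by_cases h : pderiv 1 F = 0
  · exact eq_zero_of_aeval_mem_range_of_notMem_vars k (notMem_vars_of_pderiv_eq_zero h) hF
  have hlt : degreeOf 1 (pderiv 1 F * X 0) < n := by
    rw [degreeOf_mul_X_of_ne _ (by decide), ← hn]
    exact degreeOf_pderiv_lt h
  have hE : aeval ![v k, w k] (pderiv 1 F * X 0) ∈ Set.range (D k) := by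
    obtain ⟨p, hp⟩ := hF
    exact ⟨E k p, by rw [← E_D, hp, E_aeval]⟩
  have := ih _ hlt _ hE rfl
  exact absurd ((mul_eq_zero.mp this).resolve_right (X_ne_zero 0)) h

theorem aeval_v_w_mem_adjoin (F : MvPolynomial (Fin 2) k) :
    aeval ![v k, w k] F ∈ Algebra.adjoin (Rab k) {u k, v k, w k} := by
  induction F using MvPolynomial.induction_on with
  | C c =>
    rw [aeval_C]
    exact Subalgebra.algebraMap_mem (Algebra.adjoin (Rab k) {u k, v k, w k}) (C c : Rab k)
  | add p q hp hq => rw [map_add]; exact add_mem hp hq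
  | mul_X p i hp =>
    rw [map_mul, aeval_X]
    refine mul_mem hp (Algebra.subset_adjoin ?_)
    fin_cases i <;> simp

theorem exists_eq_aeval_add_of_mem_adjoin {x : Bxyz k}
    (hx : x ∈ Algebra.adjoin (Rab k) {u k, v k, w k}) :
    ∃ (F : MvPolynomial (Fin 2) k) (c₁ c₂ c₃ : Bxyz k),
      c₁ ∈ Algebra.adjoin (Rab k) {u k, v k, w k} ∧ c₂ ∈ Algebra.adjoin (Rab k) {u k, v k, w k} ∧
      c₃ ∈ Algebra.adjoin (Rab k) {u k, v k, w k} ∧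
      x = aeval ![v k, w k] F + C (X 0) * c₁ + C (X 1) * c₂ + u k * c₃ := by
  induction hx using Algebra.adjoin_induction with
  | mem x hx =>
    rcases hx with rfl | rfl | rfl
    · exact ⟨0, 0, 0, 1, zero_mem _, zero_mem _, one_mem _, by simp⟩
    · exact ⟨X 0, 0, 0, 0, zero_mem _, zero_mem _, zero_mem _, by simp⟩
    · exact ⟨X 1, 0, 0, 0, zero_mem _, zero_mem _, zero_mem _, by simp⟩
  | algebraMap r =>
    obtain ⟨c, s, t, rfl⟩ := exists_eq_C_add_X_zero_mul_add_X_one_mul r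
    exact ⟨C c, C s, C t, 0, Subalgebra.algebraMap_mem _ s, Subalgebra.algebraMap_mem _ t,
      zero_mem _, by simp [algebraMap_eq]⟩
  | add x y _ _ hx hy =>
    obtain ⟨F, c₁, c₂, c₃, h₁, h₂, h₃, rfl⟩ := hx
    obtain ⟨G, d₁, d₂, d₃, h₁', h₂', h₃', rfl⟩ := hy
    exact ⟨F + G, c₁ + d₁, c₂ + d₂, c₃ + d₃, add_mem h₁ h₁', add_mem h₂ h₂', add_mem h₃ h₃',
      by rw [map_add]; ring⟩
  | mul x y _ hy hx hy' =>
    obtain ⟨F, c₁, c₂, c₃, h₁, h₂, h₃, rfl⟩ := hx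
    obtain ⟨G, d₁, d₂, d₃, h₁', h₂', h₃', rfl⟩ := hy'
    set f := aeval ![v k, w k] F
    set y := aeval ![v k, w k] G + C (X 0) * d₁ + C (X 1) * d₂ + u k * d₃
    have hf : f ∈ Algebra.adjoin (Rab k) {u k, v k, w k} := aeval_v_w_mem_adjoin k F
    refine ⟨F * G, f * d₁ + c₁ * y, f * d₂ + c₂ * y, f * d₃ + c₃ * y,
      add_mem (mul_mem hf h₁') (mul_mem h₁ hy), add_mem (mul_mem hf h₂') (mul_mem h₂ hy),
      add_mem (mul_mem hf h₃') (mul_mem h₃ hy), ?_⟩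
    rw [map_mul]
    ring

end

end Winkelmann

theorem stmt16_general (k : Type*) [Field k] [CharZero k]
    (D : Derivation (MvPolynomial (Fin 2) k)
        (MvPolynomial (Fin 3) (MvPolynomial (Fin 2) k))
        (MvPolynomial (Fin 3) (MvPolynomial (Fin 2) k)))
    (a b : MvPolynomial (Fin 2) k)
    (ha : a = MvPolynomial.X 0) (hb : b = MvPolynomial.X 1)
    (hDX : D (MvPolynomial.X 0)
        = algebraMap _ (MvPolynomial (Fin 3) (MvPolynomial (Fin 2) k)) a)
    (hDY : D (MvPolynomial.X 1)
        = algebraMap _ (MvPolynomial (Fin 3) (MvPolynomial (Fin 2) k)) b)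
    (u v w : MvPolynomial (Fin 3) (MvPolynomial (Fin 2) k))
    (hu : u = algebraMap _ _ b * MvPolynomial.X 0 - algebraMap _ _ a * MvPolynomial.X 1)
    (hv : v = algebraMap _ _ b * MvPolynomial.X 2 - u * MvPolynomial.X 1)
    (hw : w = algebraMap _ _ a * MvPolynomial.X 2 - u * MvPolynomial.X 0)
    (hDZ : D (MvPolynomial.X 2) = u)
    (hker : ∀ q, D q = 0 ↔ q ∈ Algebra.adjoin (MvPolynomial (Fin 2) k) {u, v, w}) :
    {q : MvPolynomial (Fin 3) (MvPolynomial (Fin 2) k) | D q = 0 ∧ q ∈ Set.range ⇑D}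
      = {q : MvPolynomial (Fin 3) (MvPolynomial (Fin 2) k) |
          ∃ c₁ c₂ c₃, D c₁ = 0 ∧ D c₂ = 0 ∧ D c₃ = 0 ∧
            q = algebraMap _ _ a * c₁ + algebraMap _ _ b * c₂ + u * c₃} := by
  subst ha hb
  obtain rfl : u = Winkelmann.u k := hu
  obtain rfl : v = Winkelmann.v k := hv
  obtain rfl : w = Winkelmann.w k := hw
  obtain rfl : D = Winkelmann.D k :=
    derivation_ext fun i => by fin_cases i <;> simp [hDX, hDY, hDZ, algebraMap_eq]
  ext q
  simp only [algebraMap_eq]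
  constructor
  · rintro ⟨hq, p, hp⟩
    obtain ⟨F, c₁, c₂, c₃, h₁, h₂, h₃, rfl⟩ :=
      Winkelmann.exists_eq_aeval_add_of_mem_adjoin k ((hker q).1 hq)
    replace h₁ := (hker c₁).2 h₁
    replace h₂ := (hker c₂).2 h₂
    replace h₃ := (hker c₃).2 h₃
    have hF : aeval ![Winkelmann.v k, Winkelmann.w k] F ∈ Set.range (Winkelmann.D k) :=
      ⟨p - (X 0 * c₁ + X 1 * c₂ + X 2 * c₃), by
        rw [map_sub, hp, Winkelmann.D_X_mul_add_X_mul_add_X_mul k h₁ h₂ h₃]; ring⟩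
    rw [Winkelmann.eq_zero_of_aeval_mem_range k F hF, map_zero, zero_add]
    exact ⟨c₁, c₂, c₃, h₁, h₂, h₃, rfl⟩
  · rintro ⟨c₁, c₂, c₃, h₁, h₂, h₃, rfl⟩
    exact ⟨by simp [Derivation.leibniz, h₁, h₂, h₃], _,
      Winkelmann.D_X_mul_add_X_mul_add_X_mul k h₁ h₂ h₃⟩

/-- **Example `wink1`**: let `k` be a field of characteristic zero, `R = k[a,b]`,
`B = R[X,Y,Z]` and `D` the `R`-derivation with `DX = a`, `DY = b`, `DZ = bX − aY`; `D`
is a locally nilpotent nice `R`-derivation which is not fixed point free, with kernel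
`A = R[u,v,w]` where `u = bX − aY`, `v = bZ − uY`, `w = aZ − uX`.  Then the plinth
ideal `I_1` of `D` equals the ideal `(a, b, u)A` of `A`. -/
theorem stmt16 (k : Type*) [Field k] [CharZero k]
    (D : Derivation (MvPolynomial (Fin 2) k)
        (MvPolynomial (Fin 3) (MvPolynomial (Fin 2) k))
        (MvPolynomial (Fin 3) (MvPolynomial (Fin 2) k)))
    (a b : MvPolynomial (Fin 2) k)
    (ha : a = MvPolynomial.X 0) (hb : b = MvPolynomial.X 1)
    (hDX : D (MvPolynomial.X 0)
        = algebraMap _ (MvPolynomial (Fin 3) (MvPolynomial (Fin 2) k)) a)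
    (hDY : D (MvPolynomial.X 1)
        = algebraMap _ (MvPolynomial (Fin 3) (MvPolynomial (Fin 2) k)) b)
    (u v w : MvPolynomial (Fin 3) (MvPolynomial (Fin 2) k))
    (hu : u = algebraMap _ _ b * MvPolynomial.X 0 - algebraMap _ _ a * MvPolynomial.X 1)
    (hv : v = algebraMap _ _ b * MvPolynomial.X 2 - u * MvPolynomial.X 1)
    (hw : w = algebraMap _ _ a * MvPolynomial.X 2 - u * MvPolynomial.X 0)
    (hDZ : D (MvPolynomial.X 2) = u)
    (hlnd : ∀ q, ∃ M : ℕ, (⇑D)^[M] q = 0)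
    (hnice : ∀ i : Fin 3, D (D (MvPolynomial.X i)) = 0)
    (hnfpf : Ideal.span (Set.range ⇑D) ≠ ⊤)
    (hker : ∀ q, D q = 0 ↔ q ∈ Algebra.adjoin (MvPolynomial (Fin 2) k) {u, v, w}) :
    {q : MvPolynomial (Fin 3) (MvPolynomial (Fin 2) k) | D q = 0 ∧ q ∈ Set.range ⇑D}
      = {q : MvPolynomial (Fin 3) (MvPolynomial (Fin 2) k) |
          ∃ c₁ c₂ c₃, D c₁ = 0 ∧ D c₂ = 0 ∧ D c₃ = 0 ∧
            q = algebraMap _ _ a * c₁ + algebraMap _ _ b * c₂ + u * c₃} :=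
  stmt16_general k D a b ha hb hDX hDY u v w hu hv hw hDZ hker
end

section
/- Let k be a field of characteristic zero, R = k[t] a polynomial ring in one variable, and B = R[X_1,X_2]. Let D be the R-derivation on B determined by DX_1 = t(1 − t) and DX_2 = −tX_1 + 1 − t, which is an irreducible quasi-nice locally nilpotent R-derivation with Ker(D) = R[F], where F = t(1 − t)X_2 + (t/2)X_1² − X_1 + tX_1. Then the plinth ideal I_1 of D equals (1 − t)·Ker(D); in particular, I_1 ≠ t(1 − t)·Ker(D) (indeed D((1/2)X_1² + (1 − t)X_2) = (1 − t)²). -/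
/-!
Write `w = 1 - t` and `s = ½X₁² + X₁ + wX₂`, so that `Ds = w`. If `q = Db` lies in
`Ker D = R[F]`, then `D(wb - qs) = 0`, so `wb = c + qs` with `c, q ∈ R[F]`. Reducing modulo `w`
and setting `X₂ = 0` sends `F` to `X₁²/2` and `s` to `X₁²/2 + X₁`; comparing odd parts shows that
`q`, as a polynomial in `F`, vanishes at `t = 1`, i.e. `q ∈ w·Ker D`. Conversely `w c = D(sc)`
for `c ∈ Ker D`.
-/

open Polynomial

theorem Derivation.map_mul_sub_mul_eq_zero {R B : Type*} [CommRing R] [CommRing B] [Algebra R B]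
    (D : Derivation R B B) {s b : B} (hs : D (D s) = 0) (hb : D (D b) = 0) :
    D (D s * b - D b * s) = 0 := by
  rw [map_sub, Derivation.leibniz, Derivation.leibniz, hs, hb]
  simp only [smul_eq_mul, mul_zero]
  ring

theorem Polynomial.C_X_sub_C_dvd_of_map_evalRingHom_eq_zero {R : Type*} [CommRing R] {a : R}
    {P : R[X][X]} (h : P.map (evalRingHom a) = 0) : C (X - C a) ∣ P := by
  have hP : P ∈ RingHom.ker (mapRingHom (evalRingHom a)) := h
  rwa [ker_mapRingHom, ker_evalRingHom, Ideal.map_span, Set.image_singleton,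
    Ideal.mem_span_singleton] at hP

theorem Polynomial.eq_zero_of_comp_add_comp_mul_X {k : Type*} [CommRing k] [IsDomain k]
    [CharZero k] {a : k} (ha : a ≠ 0) {c g : k[X]}
    (h : c.comp (C a * X ^ 2) + g.comp (C a * X ^ 2) * X = 0) :
    g = 0 := by
  have hodd := congrArg (·.comp (-X)) h
  simp only [add_comp, mul_comp, comp_assoc, C_comp, pow_comp, X_comp, neg_sq, zero_comp] at hodd
  have hg : g.comp (C a * X ^ 2) * (2 * X) = 0 := by linear_combination h - hodd
  have hg' : g.comp (C a * X ^ 2) = 0 := by simpa [X_ne_zero] using hg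
  refine (comp_eq_zero_iff.mp hg').resolve_right fun ⟨_, hconst⟩ => ?_
  have := congrArg natDegree hconst
  simp [natDegree_C_mul_X_pow 2 a ha] at this

theorem MvPolynomial.algebraMap_X_not_dvd_one_sub_X_sq {σ R : Type*} [CommRing R] [Nontrivial R] :
    ¬ algebraMap R[X] (MvPolynomial σ R[X]) Polynomial.X
      ∣ algebraMap R[X] _ ((1 - Polynomial.X) ^ 2) := by
  intro h
  have := map_dvd MvPolynomial.constantCoeff h
  simp [X_dvd_iff, coeff_zero_eq_eval_zero] at this

noncomputable section

namespace QuasiNiceExample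

variable (k : Type*) [Field k]

local notation "𝔹" => MvPolynomial (Fin 2) k[X]

def kerGenerator : 𝔹 :=
  algebraMap k[X] 𝔹 (X * (1 - X)) * MvPolynomial.X 1
    + algebraMap k[X] 𝔹 (C (2 : k)⁻¹ * X) * MvPolynomial.X 0 ^ 2
    - MvPolynomial.X 0 + algebraMap k[X] 𝔹 X * MvPolynomial.X 0

def slice : 𝔹 :=
  algebraMap k[X] 𝔹 (C (2 : k)⁻¹) * MvPolynomial.X 0 ^ 2 + MvPolynomial.X 0
    + algebraMap k[X] 𝔹 (1 - X) * MvPolynomial.X 1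

def fibreAtOne : 𝔹 →+* k[X] :=
  MvPolynomial.eval₂Hom (C.comp (evalRingHom 1)) ![X, 0]

variable {k}

theorem fibreAtOne_algebraMap (r : k[X]) : fibreAtOne k (algebraMap _ _ r) = C (r.eval 1) := by
  simp [fibreAtOne, MvPolynomial.algebraMap_eq]

theorem fibreAtOne_kerGenerator : fibreAtOne k (kerGenerator k) = C (2 : k)⁻¹ * X ^ 2 := by
  simp only [kerGenerator, map_add, map_sub, map_mul, map_pow, fibreAtOne_algebraMap]
  simp [fibreAtOne]

theorem fibreAtOne_slice : fibreAtOne k (slice k) = C (2 : k)⁻¹ * X ^ 2 + X := by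
  simp only [slice, map_add, map_mul, map_pow, fibreAtOne_algebraMap]
  simp [fibreAtOne]

theorem fibreAtOne_aeval_kerGenerator (P : k[X][X]) :
    fibreAtOne k (aeval (kerGenerator k) P)
      = (P.map (evalRingHom 1)).comp (C (2 : k)⁻¹ * X ^ 2) := by
  have hcomp : (fibreAtOne k).comp (algebraMap k[X] 𝔹) = C.comp (evalRingHom 1) :=
    RingHom.ext fibreAtOne_algebraMap
  rw [aeval_def, hom_eval₂, hcomp, fibreAtOne_kerGenerator, comp, eval₂_map]

theorem C_one_sub_X_dvd_of_eq_add_mul_slice [CharZero k] {b : 𝔹} {Pc P : k[X][X]}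
    (h : algebraMap k[X] 𝔹 (1 - X) * b
      = aeval (kerGenerator k) Pc + aeval (kerGenerator k) P * slice k) :
    C (1 - X) ∣ P := by
  have hfibre := congrArg (fibreAtOne k) h
  simp only [map_add, map_mul, fibreAtOne_algebraMap, fibreAtOne_aeval_kerGenerator,
    fibreAtOne_slice] at hfibre
  have hP : P.map (evalRingHom 1) = 0 := by
    refine eq_zero_of_comp_add_comp_mul_X (inv_ne_zero two_ne_zero)
      (c := Pc.map (evalRingHom 1) + P.map (evalRingHom 1) * X) ?_
    simp only [eval_sub, eval_one, eval_X, sub_self, C_0, zero_mul] at hfibre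
    simp only [add_comp, mul_comp, X_comp]
    linear_combination -hfibre
  have hneg : C (1 - X : k[X]) = -C (X - C 1) := by simp
  rw [hneg]
  exact (C_X_sub_C_dvd_of_map_evalRingHom_eq_zero hP).neg_left

theorem map_slice [CharZero k] {D : Derivation k[X] 𝔹 𝔹}
    (hDX1 : D (MvPolynomial.X 0) = algebraMap k[X] 𝔹 (X * (1 - X)))
    (hDX2 : D (MvPolynomial.X 1)
      = -algebraMap k[X] 𝔹 X * MvPolynomial.X 0 + algebraMap k[X] 𝔹 (1 - X)) :
    D (slice k) = algebraMap k[X] 𝔹 (1 - X) := by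
  have hhalf : algebraMap k[X] 𝔹 (C (2 : k)⁻¹) * 2 = 1 := by
    rw [← map_ofNat (algebraMap k[X] 𝔹) 2, ← map_mul, ← map_ofNat C 2, ← C_mul,
      inv_mul_cancel₀ two_ne_zero, C_1, map_one]
  simp only [slice, map_add, pow_two, Derivation.leibniz, hDX1, hDX2, Derivation.map_algebraMap,
    Derivation.map_one_eq_zero, smul_eq_mul, map_mul, map_sub, map_one]
  linear_combination (MvPolynomial.X 0 * algebraMap k[X] 𝔹 X * (1 - algebraMap k[X] 𝔹 X)) * hhalf

theorem plinth_eq [CharZero k] {D : Derivation k[X] 𝔹 𝔹}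
    (hDs : D (slice k) = algebraMap k[X] 𝔹 (1 - X))
    (hker : ∀ q, D q = 0 ↔ q ∈ Algebra.adjoin k[X] {kerGenerator k}) :
    {q : 𝔹 | D q = 0 ∧ q ∈ Set.range D}
      = {q : 𝔹 | ∃ c, D c = 0 ∧ q = algebraMap k[X] 𝔹 (1 - X) * c} := by
  have hker_aeval : ∀ x, D x = 0 ↔ ∃ P, aeval (kerGenerator k) P = x := fun x => by
    rw [hker, Algebra.adjoin_singleton_eq_range_aeval, AlgHom.mem_range]
  ext q
  constructor
  · rintro ⟨hq, b, rfl⟩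
    obtain ⟨P, hP⟩ := (hker_aeval _).mp hq
    obtain ⟨Pc, hPc⟩ := (hker_aeval _).mp <| D.map_mul_sub_mul_eq_zero (s := slice k) (b := b)
      (by rw [hDs, D.map_algebraMap]) hq
    rw [hDs, ← hP] at hPc
    obtain ⟨Q, rfl⟩ := C_one_sub_X_dvd_of_eq_add_mul_slice (b := b) (Pc := Pc) (P := P)
      (by linear_combination -hPc)
    exact ⟨aeval (kerGenerator k) Q, (hker_aeval _).mpr ⟨Q, rfl⟩,
      by rw [← hP, map_mul, aeval_C]⟩
  · rintro ⟨c, hc, rfl⟩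
    refine ⟨by rw [← Algebra.smul_def, D.map_smul, hc, smul_zero], slice k * c, ?_⟩
    rw [Derivation.leibniz, hc, hDs, smul_zero, zero_add, smul_eq_mul, mul_comm]

end QuasiNiceExample

end

theorem stmt18_general (k : Type*) [Field k] [CharZero k]
    (t : Polynomial k) (ht : t = Polynomial.X)
    (D : Derivation (Polynomial k) (MvPolynomial (Fin 2) (Polynomial k))
        (MvPolynomial (Fin 2) (Polynomial k)))
    (hDX1 : D (MvPolynomial.X 0)
        = algebraMap (Polynomial k) (MvPolynomial (Fin 2) (Polynomial k)) (t * (1 - t)))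
    (hDX2 : D (MvPolynomial.X 1)
        = - (algebraMap (Polynomial k) (MvPolynomial (Fin 2) (Polynomial k)) t)
            * MvPolynomial.X 0
          + algebraMap (Polynomial k) (MvPolynomial (Fin 2) (Polynomial k)) (1 - t))
    (F : MvPolynomial (Fin 2) (Polynomial k))
    (hF : F = algebraMap _ _ (t * (1 - t)) * MvPolynomial.X 1
        + algebraMap (Polynomial k) (MvPolynomial (Fin 2) (Polynomial k))
            (Polynomial.C ((2 : k)⁻¹) * t) * MvPolynomial.X 0 ^ 2
        - MvPolynomial.X 0 + algebraMap _ _ t * MvPolynomial.X 0)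
    (hker : ∀ q, D q = 0 ↔ q ∈ Algebra.adjoin (Polynomial k) {F}) :
    {q : MvPolynomial (Fin 2) (Polynomial k) | D q = 0 ∧ q ∈ Set.range ⇑D}
      = {q : MvPolynomial (Fin 2) (Polynomial k) | ∃ c, D c = 0 ∧
          q = algebraMap _ _ (1 - t) * c} ∧
    {q : MvPolynomial (Fin 2) (Polynomial k) | D q = 0 ∧ q ∈ Set.range ⇑D}
      ≠ {q : MvPolynomial (Fin 2) (Polynomial k) | ∃ c, D c = 0 ∧
          q = algebraMap _ _ (t * (1 - t)) * c} ∧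
    D (algebraMap (Polynomial k) (MvPolynomial (Fin 2) (Polynomial k))
          (Polynomial.C ((2 : k)⁻¹)) * MvPolynomial.X 0 ^ 2
        + algebraMap _ _ (1 - t) * MvPolynomial.X 1)
      = algebraMap _ _ ((1 - t) ^ 2) := by
  subst ht hF
  have hDs := QuasiNiceExample.map_slice hDX1 hDX2
  have hplinth := QuasiNiceExample.plinth_eq hDs hker
  refine ⟨hplinth, fun heq => ?_, ?_⟩
  · have hmem : algebraMap k[X] (MvPolynomial (Fin 2) k[X]) ((1 - X) ^ 2)
        ∈ {q | D q = 0 ∧ q ∈ Set.range D} := by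
      rw [hplinth]
      exact ⟨_, D.map_algebraMap (1 - X), by rw [sq, map_mul]⟩
    rw [heq] at hmem
    obtain ⟨c, -, hc⟩ := hmem
    exact MvPolynomial.algebraMap_X_not_dvd_one_sub_X_sq
      ⟨algebraMap k[X] _ (1 - X) * c, by rw [hc, map_mul, mul_assoc]⟩
  · have hslice : algebraMap k[X] (MvPolynomial (Fin 2) k[X]) (C (2 : k)⁻¹) * MvPolynomial.X 0 ^ 2
        + algebraMap k[X] _ (1 - X) * MvPolynomial.X 1
        = QuasiNiceExample.slice k - MvPolynomial.X 0 := by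
      rw [QuasiNiceExample.slice]; ring
    rw [hslice, map_sub, hDs, hDX1, ← map_sub]
    congr 1
    ring

/-- **Final example**: let `k` be a field of characteristic zero, `R = k[t]`,
`B = R[X_1,X_2]` and `D` the `R`-derivation with `DX_1 = t(1 − t)` and
`DX_2 = −tX_1 + 1 − t`; it is an irreducible quasi-nice locally nilpotent
`R`-derivation with `Ker D = R[F]`, where
`F = t(1 − t)X_2 + (t/2)X_1² − X_1 + tX_1`.  Then the plinth ideal `I_1` equals
`(1 − t)·Ker D`; in particular `I_1 ≠ t(1 − t)·Ker D` (indeed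
`D((1/2)X_1² + (1 − t)X_2) = (1 − t)²`). -/
theorem stmt18 (k : Type*) [Field k] [CharZero k]
    (t : Polynomial k) (ht : t = Polynomial.X)
    (D : Derivation (Polynomial k) (MvPolynomial (Fin 2) (Polynomial k))
        (MvPolynomial (Fin 2) (Polynomial k)))
    (hDX1 : D (MvPolynomial.X 0)
        = algebraMap (Polynomial k) (MvPolynomial (Fin 2) (Polynomial k)) (t * (1 - t)))
    (hDX2 : D (MvPolynomial.X 1)
        = - (algebraMap (Polynomial k) (MvPolynomial (Fin 2) (Polynomial k)) t)
            * MvPolynomial.X 0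
          + algebraMap (Polynomial k) (MvPolynomial (Fin 2) (Polynomial k)) (1 - t))
    (hlnd : ∀ q, ∃ M : ℕ, (⇑D)^[M] q = 0)
    (hirr : ∀ q : MvPolynomial (Fin 2) (Polynomial k),
      (∀ x, D x ∈ Ideal.span {q}) → IsUnit q)
    (hquasi : D (D (MvPolynomial.X 0)) = 0)
    (F : MvPolynomial (Fin 2) (Polynomial k))
    (hF : F = algebraMap _ _ (t * (1 - t)) * MvPolynomial.X 1
        + algebraMap (Polynomial k) (MvPolynomial (Fin 2) (Polynomial k))
            (Polynomial.C ((2 : k)⁻¹) * t) * MvPolynomial.X 0 ^ 2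
        - MvPolynomial.X 0 + algebraMap _ _ t * MvPolynomial.X 0)
    (hker : ∀ q, D q = 0 ↔ q ∈ Algebra.adjoin (Polynomial k) {F}) :
    {q : MvPolynomial (Fin 2) (Polynomial k) | D q = 0 ∧ q ∈ Set.range ⇑D}
      = {q : MvPolynomial (Fin 2) (Polynomial k) | ∃ c, D c = 0 ∧
          q = algebraMap _ _ (1 - t) * c} ∧
    {q : MvPolynomial (Fin 2) (Polynomial k) | D q = 0 ∧ q ∈ Set.range ⇑D}
      ≠ {q : MvPolynomial (Fin 2) (Polynomial k) | ∃ c, D c = 0 ∧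
          q = algebraMap _ _ (t * (1 - t)) * c} ∧
    D (algebraMap (Polynomial k) (MvPolynomial (Fin 2) (Polynomial k))
          (Polynomial.C ((2 : k)⁻¹)) * MvPolynomial.X 0 ^ 2
        + algebraMap _ _ (1 - t) * MvPolynomial.X 1)
      = algebraMap _ _ ((1 - t) ^ 2) :=
  stmt18_general k t ht D hDX1 hDX2 F hF hker
end
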